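/- arXiv:1601.06447 — 3 statements merged into one kernel-verified Lean document; each statement's English description precedes it below -/
import Mathlib

section
/- Let μ be a σ-finite measure on a measurable space Y, and let f₀, f₁ : Y → [0,∞) be measurable with ∫ f₀ dμ = ∫ f₁ dμ = 1 and f₀ > 0, f₁ > 0 μ-almost everywhere. Let G : [0,1] → ℝ be concave and bounded. Then the function x ↦ ∫_Y ((1−x)f₀(y) + x f₁(y)) · G( x f₁(y) / ((1−x)f₀(y) + x f₁(y)) ) dμ(y) is well defined (the integrand is integrable for every x ∈ [0,1]) and is concave on [0,1]. -/
/-!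
For every sample `y` the integrand is the perspective `(u, v) ↦ v * G (u / v)` of `G`, evaluated
along the segment `x ↦ (x f₁ y, (1 - x) f₀ y + x f₁ y)`. The perspective of a concave function is
jointly concave, so each integrand is concave in `x`, and an integral of concave functions is
concave. Integrability holds because the mixture density is integrable and `G` is bounded on
`[0, 1]` and measurable there, being continuous on `(0, 1)`.
-/

open Set MeasureTheory

section Perspective

variable {G : ℝ → ℝ}

lemma div_mem_Icc_zero_one {u v : ℝ} (hu : 0 ≤ u) (huv : u ≤ v) : u / v ∈ Icc (0 : ℝ) 1 :=
  ⟨div_nonneg hu (hu.trans huv), div_le_one_of_le₀ huv (hu.trans huv)⟩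

theorem concaveOn_perspective (hG : ConcaveOn ℝ (Icc (0 : ℝ) 1) G) :
    ConcaveOn ℝ {p : ℝ × ℝ | 0 ≤ p.1 ∧ p.1 ≤ p.2} (fun p => p.2 * G (p.1 / p.2)) := by
  refine ⟨?_, ?_⟩
  · rintro p ⟨hp₁, hp⟩ q ⟨hq₁, hq⟩ a b ha hb -
    simp only [mem_ofPred_eq, Prod.fst_add, Prod.snd_add, Prod.smul_fst, Prod.smul_snd, smul_eq_mul]
    constructor <;> nlinarith
  rintro ⟨u, v⟩ ⟨hu, huv⟩ ⟨u', v'⟩ ⟨hu', huv'⟩ a b ha hb hab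
  dsimp only at hu huv hu' huv'
  simp only [Prod.smul_mk, Prod.mk_add_mk, smul_eq_mul]
  have hav : 0 ≤ a * v := mul_nonneg ha (hu.trans huv)
  have hbv : 0 ≤ b * v' := mul_nonneg hb (hu'.trans huv')
  rcases (add_nonneg hav hbv).eq_or_lt with hS | hS
  · have ha0 : a * v = 0 := by linarith
    have hb0 : b * v' = 0 := by linarith
    rw [← hS, ← mul_assoc, ← mul_assoc, ha0, hb0]
    simp
  set S := a * v + b * v'
  -- The weights `a v / S` and `b v' / S` turn the chord of the perspective into a chord of `G`.
  have key := hG.2 (div_mem_Icc_zero_one hu huv) (div_mem_Icc_zero_one hu' huv')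
    (div_nonneg hav hS.le) (div_nonneg hbv hS.le) (by rw [← add_div, div_self hS.ne'])
  have harg : (a * v / S) • (u / v) + (b * v' / S) • (u' / v') = (a * u + b * u') / S := by
    have hvu : v * (u / v) = u := mul_div_cancel_of_imp' fun h => le_antisymm (h ▸ huv) hu
    have hvu' : v' * (u' / v') = u' := mul_div_cancel_of_imp' fun h => le_antisymm (h ▸ huv') hu'
    calc _ = (a * (v * (u / v)) + b * (v' * (u' / v'))) / S := by simp only [smul_eq_mul]; ring
      _ = _ := by rw [hvu, hvu']
  rw [harg, smul_eq_mul, smul_eq_mul] at key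
  calc a * (v * G (u / v)) + b * (v' * G (u' / v'))
      = S * (a * v / S * G (u / v) + b * v' / S * G (u' / v')) := by
        field_simp
    _ ≤ S * G ((a * u + b * u') / S) := mul_le_mul_of_nonneg_left key hS.le

lemma mixture_mem_cone {c₀ c₁ x : ℝ} (h₀ : 0 ≤ c₀) (h₁ : 0 ≤ c₁) (hx : x ∈ Icc (0 : ℝ) 1) :
    0 ≤ x * c₁ ∧ x * c₁ ≤ (1 - x) * c₀ + x * c₁ :=
  ⟨mul_nonneg hx.1 h₁, le_add_of_nonneg_left (mul_nonneg (sub_nonneg.2 hx.2) h₀)⟩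

theorem concaveOn_mixture_perspective (hG : ConcaveOn ℝ (Icc (0 : ℝ) 1) G)
    {c₀ c₁ : ℝ} (h₀ : 0 ≤ c₀) (h₁ : 0 ≤ c₁) :
    ConcaveOn ℝ (Icc (0 : ℝ) 1)
      (fun x => ((1 - x) * c₀ + x * c₁) * G (x * c₁ / ((1 - x) * c₀ + x * c₁))) := by
  have hline : ∀ x : ℝ, AffineMap.lineMap (0, c₀) (c₁, c₁) x = (x * c₁, (1 - x) * c₀ + x * c₁) :=
    fun x => by
      ext <;> simp [AffineMap.lineMap_apply]
      ring
  refine ((concaveOn_perspective hG).comp_affineMap (AffineMap.lineMap (0, c₀) (c₁, c₁))).subset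
    (fun x hx => ?_) (convex_Icc 0 1) |>.congr fun x _ => ?_
  · rw [mem_preimage, hline]
    exact mixture_mem_cone h₀ h₁ hx
  · simp only [Function.comp_apply, hline]

end Perspective

theorem ConcaveOn.integral {E Y : Type*} [AddCommGroup E] [Module ℝ E] [MeasurableSpace Y]
    {μ : Measure Y} {s : Set E} {F : E → Y → ℝ} (hF : ∀ᵐ y ∂μ, ConcaveOn ℝ s (F · y))
    (hs : Convex ℝ s) (hint : ∀ x ∈ s, Integrable (F x) μ) :
    ConcaveOn ℝ s (fun x => ∫ y, F x y ∂μ) := by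
  refine ⟨hs, fun x hx z hz a b ha hb hab => ?_⟩
  simp only [smul_eq_mul]
  rw [← integral_const_mul, ← integral_const_mul,
    ← integral_add ((hint x hx).const_mul a) ((hint z hz).const_mul b)]
  refine integral_mono_ae (((hint x hx).const_mul a).add ((hint z hz).const_mul b))
    (hint _ (hs hx hz ha hb hab)) ?_
  filter_upwards [hF] with y hy
  exact hy.2 hx hz ha hb hab

theorem ConcaveOn.measurable_domRestrict_Icc {G : ℝ → ℝ} {a b : ℝ} (hG : ConcaveOn ℝ (Icc a b) G) :
    Measurable ((Icc a b).domRestrict G) := by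
  have hcont : ContinuousOn ((Icc a b).domRestrict G) (Subtype.val ⁻¹' Ioo a b) := by
    have := hG.continuousOn_interior
    rw [interior_Icc] at this
    exact this.comp continuous_subtype_val.continuousOn (mapsTo_preimage _ _)
  refine hcont.measurable_of_countable_compl ?_
  refine ((countable_singleton a).insert b |>.preimage Subtype.val_injective).mono ?_
  rintro ⟨x, hax, hxb⟩ hx
  simp only [mem_compl_iff, mem_preimage, mem_Ioo, not_and_or, not_lt] at hx
  rcases hx with hx | hx
  · exact Or.inr (le_antisymm hx hax)
  · exact Or.inl (le_antisymm hxb hx)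

theorem MeasureTheory.Integrable.mul_comp_of_mapsTo_Icc {Y : Type*} [MeasurableSpace Y]
    {μ : Measure Y} {G : ℝ → ℝ} {a b M : ℝ} {d t : Y → ℝ} (hd : Integrable d μ) (ht : Measurable t)
    (htI : ∀ y, t y ∈ Icc a b) (hGm : Measurable ((Icc a b).domRestrict G))
    (hGbd : ∀ x ∈ Icc a b, |G x| ≤ M) :
    Integrable (fun y => d y * G (t y)) μ :=
  hd.mul_bdd (hGm.comp (ht.subtype_mk (h := htI))).aestronglyMeasurable
    (ae_of_all _ fun y => hGbd _ (htI y))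

theorem expected_cost_to_go_concave_general
    {Y : Type*} [MeasurableSpace Y] (μ : Measure Y)
    (f₀ f₁ : Y → ℝ) (hf₀m : Measurable f₀) (hf₁m : Measurable f₁)
    (hf₀nn : ∀ y, 0 ≤ f₀ y) (hf₁nn : ∀ y, 0 ≤ f₁ y)
    (hf₀1 : ∫ y, f₀ y ∂μ = 1) (hf₁1 : ∫ y, f₁ y ∂μ = 1)
    (G : ℝ → ℝ) (hG : ConcaveOn ℝ (Icc (0:ℝ) 1) G)
    (M : ℝ) (hGbd : ∀ x ∈ Icc (0:ℝ) 1, |G x| ≤ M) :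
    (∀ x ∈ Icc (0:ℝ) 1,
      Integrable (fun y => ((1 - x) * f₀ y + x * f₁ y) *
        G (x * f₁ y / ((1 - x) * f₀ y + x * f₁ y))) μ) ∧
    ConcaveOn ℝ (Icc (0:ℝ) 1)
      (fun x => ∫ y, ((1 - x) * f₀ y + x * f₁ y) *
        G (x * f₁ y / ((1 - x) * f₀ y + x * f₁ y)) ∂μ) := by
  have hf₀i : Integrable f₀ μ := .of_integral_ne_zero (by simp [hf₀1])
  have hf₁i : Integrable f₁ μ := .of_integral_ne_zero (by simp [hf₁1])
  have hint : ∀ x ∈ Icc (0:ℝ) 1,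
      Integrable (fun y => ((1 - x) * f₀ y + x * f₁ y) *
        G (x * f₁ y / ((1 - x) * f₀ y + x * f₁ y))) μ := fun x hx =>
    ((hf₀i.const_mul _).add (hf₁i.const_mul _)).mul_comp_of_mapsTo_Icc
      ((hf₁m.const_mul _).div ((hf₀m.const_mul _).add (hf₁m.const_mul _)))
      (fun y => (mixture_mem_cone (hf₀nn y) (hf₁nn y) hx).elim div_mem_Icc_zero_one)
      hG.measurable_domRestrict_Icc hGbd
  exact ⟨hint, ConcaveOn.integral
    (ae_of_all _ fun y => concaveOn_mixture_perspective hG (hf₀nn y) (hf₁nn y))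
    (convex_Icc 0 1) hint⟩

/-- Expectation step in Lemma 3: the one-step-ahead conditional expectation of a
bounded concave cost-to-go `G` is well defined and concave in the posterior. -/
theorem expected_cost_to_go_concave
    {Y : Type*} [MeasurableSpace Y] (μ : Measure Y) [SigmaFinite μ]
    (f₀ f₁ : Y → ℝ) (hf₀m : Measurable f₀) (hf₁m : Measurable f₁)
    (hf₀nn : ∀ y, 0 ≤ f₀ y) (hf₁nn : ∀ y, 0 ≤ f₁ y)
    (hf₀1 : ∫ y, f₀ y ∂μ = 1) (hf₁1 : ∫ y, f₁ y ∂μ = 1)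
    (hf₀pos : ∀ᵐ y ∂μ, 0 < f₀ y) (hf₁pos : ∀ᵐ y ∂μ, 0 < f₁ y)
    (G : ℝ → ℝ) (hG : ConcaveOn ℝ (Icc (0:ℝ) 1) G)
    (M : ℝ) (hGbd : ∀ x ∈ Icc (0:ℝ) 1, |G x| ≤ M) :
    (∀ x ∈ Icc (0:ℝ) 1,
      Integrable (fun y => ((1 - x) * f₀ y + x * f₁ y) *
        G (x * f₁ y / ((1 - x) * f₀ y + x * f₁ y))) μ) ∧
    ConcaveOn ℝ (Icc (0:ℝ) 1)
      (fun x => ∫ y, ((1 - x) * f₀ y + x * f₁ y) *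
        G (x * f₁ y / ((1 - x) * f₀ y + x * f₁ y)) ∂μ) :=
  expected_cost_to_go_concave_general μ f₀ f₁ hf₀m hf₁m hf₀nn hf₁nn hf₀1 hf₁1 G hG M hGbd
end

section
/- Let μ be a σ-finite measure on a measurable space Y; for ℓ = 1,…,K let f₀^ℓ, f₁^ℓ : Y → [0,∞) be measurable probability densities with respect to μ that are strictly positive μ-a.e.; let C_ℓ > 0 be sampling costs and μ₀, μ₁ > 0 multipliers, and set φ(x) = min{μ₁ x, μ₀(1−x)} for x ∈ [0,1]. Suppose G : [0,1] → ℝ is concave, bounded, and satisfies 0 ≤ G(x) ≤ φ(x) for all x ∈ [0,1]. For each ℓ define Ḡ_ℓ(x) = C_ℓ + ∫_Y ((1−x)f₀^ℓ(y) + x f₁^ℓ(y)) · G( x f₁^ℓ(y) / ((1−x)f₀^ℓ(y) + x f₁^ℓ(y)) ) dμ(y), and let G̃(x) = min_{1≤ℓ≤K} Ḡ_ℓ(x). Then: (i) each Ḡ_ℓ is concave on [0,1]; (ii) G̃ is concave on [0,1]; (iii) G̃(0) > 0 and G̃(1) > 0; and (iv) the updated value function x ↦ min{φ(x), G̃(x)}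 is concave on [0,1]. -/
/-!
With the mixture density `d_x = (1 - x) f₀ + x f₁` and the posterior `p_x = x f₁ / d_x`,
`Ḡ(x) = C + ∫ d_x(y) G(p_x(y)) dμ(y)`. Both `d_x` and `d_x p_x = x f₁` are affine in `x`, so
for every observation `y` the integrand `x ↦ d_x(y) G(p_x(y))` is a perspective of the concave
function `G`, hence concave, and integrating preserves concavity. Minima of concave functions
are concave, and `Ḡ ≥ C > 0` on `[0, 1]` because `G ≥ 0`.
-/

open Set MeasureTheory

def mixtureDensity (a b x : ℝ) : ℝ := (1 - x) * a + x * b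

/-- Bayes update of the prior probability `x` of `H₁` after an observation with likelihoods
`a`, `b`; it is `0` when the observation has density `0` (division by zero). -/
noncomputable def posterior (a b x : ℝ) : ℝ := x * b / mixtureDensity a b x

section Posterior

variable {a b x : ℝ}

lemma mixtureDensity_nonneg (ha : 0 ≤ a) (hb : 0 ≤ b) (hx : x ∈ Icc (0 : ℝ) 1) :
    0 ≤ mixtureDensity a b x :=
  add_nonneg (mul_nonneg (sub_nonneg.2 hx.2) ha) (mul_nonneg hx.1 hb)

lemma mul_le_mixtureDensity (ha : 0 ≤ a) (hx : x ∈ Icc (0 : ℝ) 1) :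
    x * b ≤ mixtureDensity a b x :=
  le_add_of_nonneg_left (mul_nonneg (sub_nonneg.2 hx.2) ha)

lemma posterior_mem_Icc (ha : 0 ≤ a) (hb : 0 ≤ b) (hx : x ∈ Icc (0 : ℝ) 1) :
    posterior a b x ∈ Icc (0 : ℝ) 1 :=
  ⟨div_nonneg (mul_nonneg hx.1 hb) (mixtureDensity_nonneg ha hb hx),
    div_le_one_of_le₀ (mul_le_mixtureDensity ha hx) (mixtureDensity_nonneg ha hb hx)⟩

lemma mixtureDensity_mul_posterior (ha : 0 ≤ a) (hb : 0 ≤ b) (hx : x ∈ Icc (0 : ℝ) 1) :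
    mixtureDensity a b x * posterior a b x = x * b :=
  mul_div_cancel_of_imp' fun h =>
    le_antisymm (h ▸ mul_le_mixtureDensity ha hx) (mul_nonneg hx.1 hb)

lemma mixtureDensity_add {s t y : ℝ} (hst : s + t = 1) :
    mixtureDensity a b (s * x + t * y) =
      s * mixtureDensity a b x + t * mixtureDensity a b y := by
  unfold mixtureDensity
  linear_combination (-a) * hst

end Posterior

theorem ConcaveOn.mul_add_mul_le {𝕜 E : Type*} [Field 𝕜] [LinearOrder 𝕜]
    [IsStrictOrderedRing 𝕜] [AddCommGroup E] [Module 𝕜 E] {s : Set E} {g : E → 𝕜}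
    (hg : ConcaveOn 𝕜 s g)
    {u v : E} (hu : u ∈ s) (hv : v ∈ s) {α β : 𝕜} (hα : 0 ≤ α) (hβ : 0 ≤ β) :
    α * g u + β * g v ≤ (α + β) * g ((α + β)⁻¹ • (α • u + β • v)) := by
  rcases (add_nonneg hα hβ).eq_or_lt with h | h
  · obtain ⟨rfl, rfl⟩ := (add_eq_zero_iff_of_nonneg hα hβ).1 h.symm
    simp
  have hconc := hg.2 hu hv (div_nonneg hα h.le) (div_nonneg hβ h.le) (by field_simp)
  calc α * g u + β * g v = (α + β) * ((α / (α + β)) • g u + (β / (α + β)) • g v) := by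
        simp only [smul_eq_mul]; field_simp
    _ ≤ (α + β) * g ((α / (α + β)) • u + (β / (α + β)) • v) :=
        mul_le_mul_of_nonneg_left hconc h.le
    _ = (α + β) * g ((α + β)⁻¹ • (α • u + β • v)) := by
        rw [smul_add, smul_smul, smul_smul, inv_mul_eq_div, inv_mul_eq_div]

theorem ConcaveOn.mixtureDensity_mul_comp_posterior {G : ℝ → ℝ}
    (hG : ConcaveOn ℝ (Icc 0 1) G) {a b : ℝ} (ha : 0 ≤ a) (hb : 0 ≤ b) :
    ConcaveOn ℝ (Icc 0 1) fun x => mixtureDensity a b x * G (posterior a b x) := by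
  refine ⟨convex_Icc 0 1, fun x hx y hy s t hs ht hst => ?_⟩
  have hjensen := hG.mul_add_mul_le (posterior_mem_Icc ha hb hx) (posterior_mem_Icc ha hb hy)
    (mul_nonneg hs (mixtureDensity_nonneg ha hb hx))
    (mul_nonneg ht (mixtureDensity_nonneg ha hb hy))
  have hpost : (s * mixtureDensity a b x + t * mixtureDensity a b y)⁻¹ •
      ((s * mixtureDensity a b x) • posterior a b x +
        (t * mixtureDensity a b y) • posterior a b y) = posterior a b (s * x + t * y) := by
    simp only [smul_eq_mul, mul_assoc, mixtureDensity_mul_posterior ha hb hx,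
      mixtureDensity_mul_posterior ha hb hy, ← mixtureDensity_add hst]
    unfold posterior
    ring
  rw [hpost, ← mixtureDensity_add hst] at hjensen
  simp only [smul_eq_mul]
  linarith

theorem concaveOn_integral {E X : Type*} [AddCommGroup E] [Module ℝ E] [MeasurableSpace X]
    {μ : Measure X} {s : Set E} (hs : Convex ℝ s) {F : E → X → ℝ}
    (hF : ∀ y, ConcaveOn ℝ s fun x => F x y) (hint : ∀ x ∈ s, Integrable (F x) μ) :
    ConcaveOn ℝ s fun x => ∫ y, F x y ∂μ := by
  refine ⟨hs, fun x hx x' hx' a b ha hb hab => ?_⟩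
  have hint_comb := ((hint x hx).smul a).add ((hint x' hx').smul b)
  calc a • ∫ y, F x y ∂μ + b • ∫ y, F x' y ∂μ = ∫ y, (a • F x y + b • F x' y) ∂μ := by
        rw [← integral_smul, ← integral_smul]
        exact (integral_add ((hint x hx).smul a) ((hint x' hx').smul b)).symm
    _ ≤ ∫ y, F (a • x + b • x') y ∂μ :=
        integral_mono hint_comb (hint _ (hs hx hx' ha hb hab)) fun y =>
          (hF y).2 hx hx' ha hb hab

theorem ContinuousOn.exists_measurable_eqOn_Icc {β : Type*} [TopologicalSpace β]
    [MeasurableSpace β] [BorelSpace β] {f : ℝ → β} {a b : ℝ}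
    (hf : ContinuousOn f (Ioo a b)) : ∃ g : ℝ → β, Measurable g ∧ EqOn g f (Icc a b) := by
  obtain ⟨g₀, hg₀, hg₀f⟩ :=
    (MeasurableEmbedding.subtype_coe measurableSet_Ioo).exists_measurable_extend
      (continuousOn_iff_continuous_domRestrict.1 hf).measurable fun _ => ⟨f a⟩
  refine ⟨fun t => if t = a then f a else if t = b then f b else g₀ t,
    measurable_const.ite (measurableSet_singleton a)
      (measurable_const.ite (measurableSet_singleton b) hg₀), fun t ht => ?_⟩
  dsimp only
  split_ifs with hta htb
  · rw [hta]
  · rw [htb]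
  · exact congrFun hg₀f ⟨t, ht.1.lt_of_ne' hta, ht.2.lt_of_ne htb⟩

theorem integrable_mixtureDensity_mul_comp_posterior {Y : Type*} [MeasurableSpace Y]
    {μ : Measure Y} {f₀ f₁ : Y → ℝ} (hm₀ : Measurable f₀) (hm₁ : Measurable f₁)
    (hf₀ : Integrable f₀ μ) (hf₁ : Integrable f₁ μ) (h₀ : ∀ y, 0 ≤ f₀ y) (h₁ : ∀ y, 0 ≤ f₁ y)
    {G : ℝ → ℝ} (hG : ContinuousOn G (Ioo 0 1)) {M : ℝ}
    (hGbd : ∀ x ∈ Icc (0 : ℝ) 1, |G x| ≤ M) {x : ℝ} (hx : x ∈ Icc (0 : ℝ) 1) :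
    Integrable (fun y => mixtureDensity (f₀ y) (f₁ y) x * G (posterior (f₀ y) (f₁ y) x)) μ := by
  obtain ⟨G', hG'm, hG'G⟩ := hG.exists_measurable_eqOn_Icc
  have hpost : ∀ y, posterior (f₀ y) (f₁ y) x ∈ Icc (0 : ℝ) 1 :=
    fun y => posterior_mem_Icc (h₀ y) (h₁ y) hx
  have hmix : Integrable (fun y => mixtureDensity (f₀ y) (f₁ y) x) μ :=
    (hf₀.const_mul _).add (hf₁.const_mul _)
  have hpost_meas : Measurable fun y => posterior (f₀ y) (f₁ y) x := by
    unfold posterior mixtureDensity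
    fun_prop
  refine (hmix.mul_bdd (c := M) (hG'm.comp hpost_meas).aestronglyMeasurable
    (ae_of_all _ fun y => ?_)).congr (ae_of_all _ fun y => ?_)
  · rw [Real.norm_eq_abs, Function.comp_apply, hG'G (hpost y)]
    exact hGbd _ (hpost y)
  · simp only [Function.comp_apply, hG'G (hpost y)]

theorem concaveOn_min_mul_mul_one_sub {s : Set ℝ} (hs : Convex ℝ s) (μ₀ μ₁ : ℝ) :
    ConcaveOn ℝ s fun x => min (μ₁ * x) (μ₀ * (1 - x)) :=
  ((LinearMap.mul ℝ ℝ μ₁).concaveOn hs).inf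
      (((LinearMap.mul ℝ ℝ (-μ₀)).concaveOn hs).add_const μ₀)
    |>.congr fun x _ => congrArg (min _) (show -μ₀ * x + μ₀ = _ by ring)

theorem lemma3_backward_recursion_concavity_general
    {Y : Type*} [MeasurableSpace Y] (μ : Measure Y)
    (K : ℕ) (hK : 0 < K)
    (f₀ f₁ : Fin K → Y → ℝ)
    (hm0 : ∀ ℓ, Measurable (f₀ ℓ)) (hm1 : ∀ ℓ, Measurable (f₁ ℓ))
    (h0nn : ∀ ℓ y, 0 ≤ f₀ ℓ y) (h1nn : ∀ ℓ y, 0 ≤ f₁ ℓ y)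
    (h0int : ∀ ℓ, ∫ y, f₀ ℓ y ∂μ = 1) (h1int : ∀ ℓ, ∫ y, f₁ ℓ y ∂μ = 1)
    (C : Fin K → ℝ) (hC : ∀ ℓ, 0 < C ℓ)
    (μ₀ μ₁ : ℝ)
    (φ : ℝ → ℝ) (hφ : ∀ x, φ x = min (μ₁ * x) (μ₀ * (1 - x)))
    (G : ℝ → ℝ) (hG : ConcaveOn ℝ (Icc (0:ℝ) 1) G)
    (M : ℝ) (hGbd : ∀ x ∈ Icc (0:ℝ) 1, |G x| ≤ M)
    (hGrange : ∀ x ∈ Icc (0:ℝ) 1, 0 ≤ G x ∧ G x ≤ φ x)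
    (Gbar : Fin K → ℝ → ℝ)
    (hGbar : ∀ ℓ x, Gbar ℓ x = C ℓ + ∫ y, ((1 - x) * f₀ ℓ y + x * f₁ ℓ y) *
        G (x * f₁ ℓ y / ((1 - x) * f₀ ℓ y + x * f₁ ℓ y)) ∂μ)
    (Gtilde : ℝ → ℝ)
    (hGtilde : ∀ x, Gtilde x =
      Finset.univ.inf' (Finset.univ_nonempty_iff.mpr (Fin.pos_iff_nonempty.mp hK))
        (fun ℓ => Gbar ℓ x)) :
    (∀ ℓ, ConcaveOn ℝ (Icc (0:ℝ) 1) (Gbar ℓ)) ∧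
    ConcaveOn ℝ (Icc (0:ℝ) 1) Gtilde ∧
    0 < Gtilde 0 ∧ 0 < Gtilde 1 ∧
    ConcaveOn ℝ (Icc (0:ℝ) 1) (fun x => min (φ x) (Gtilde x)) := by
  have hGbar_conc : ∀ ℓ, ConcaveOn ℝ (Icc 0 1) (Gbar ℓ) := fun ℓ => by
    rw [show Gbar ℓ = _ from funext (hGbar ℓ)]
    refine (concaveOn_const _ (convex_Icc 0 1)).add <| concaveOn_integral (convex_Icc 0 1)
      (fun y => hG.mixtureDensity_mul_comp_posterior (h0nn ℓ y) (h1nn ℓ y)) fun x hx => ?_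
    exact integrable_mixtureDensity_mul_comp_posterior (hm0 ℓ) (hm1 ℓ)
      (.of_integral_ne_zero (by simp [h0int])) (.of_integral_ne_zero (by simp [h1int]))
      (h0nn ℓ) (h1nn ℓ) (by simpa using hG.continuousOn_interior) hGbd hx
  have hGtilde_conc : ConcaveOn ℝ (Icc 0 1) Gtilde := by
    rw [show Gtilde = Finset.univ.inf' _ Gbar by ext x; rw [hGtilde, Finset.inf'_apply]]
    exact Finset.inf'_induction _ _ (fun _ h₁ _ h₂ => h₁.inf h₂) fun ℓ _ => hGbar_conc ℓ
  have hGtilde_pos : ∀ x ∈ Icc (0 : ℝ) 1, 0 < Gtilde x := fun x hx => by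
    rw [hGtilde, Finset.lt_inf'_iff]
    refine fun ℓ _ => (hC ℓ).trans_le ?_
    rw [hGbar]
    exact le_add_of_nonneg_right <| integral_nonneg fun y =>
      mul_nonneg (mixtureDensity_nonneg (h0nn ℓ y) (h1nn ℓ y) hx)
        (hGrange _ (posterior_mem_Icc (h0nn ℓ y) (h1nn ℓ y) hx)).1
  have hφ_conc : ConcaveOn ℝ (Icc 0 1) φ :=
    funext hφ ▸ concaveOn_min_mul_mul_one_sub (convex_Icc 0 1) μ₀ μ₁
  exact ⟨hGbar_conc, hGtilde_conc, hGtilde_pos 0 (by simp), hGtilde_pos 1 (by simp),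
    hφ_conc.inf hGtilde_conc⟩

/-- Lemma 3 of the paper: concavity of the one-step-ahead costs `Ḡ_ℓ`, of their
minimum `G̃`, positivity of `G̃` at the endpoints, and concavity of the updated
value function `min{φ, G̃}`. -/
theorem lemma3_backward_recursion_concavity
    {Y : Type*} [MeasurableSpace Y] (μ : Measure Y) [SigmaFinite μ]
    (K : ℕ) (hK : 0 < K)
    (f₀ f₁ : Fin K → Y → ℝ)
    (hm0 : ∀ ℓ, Measurable (f₀ ℓ)) (hm1 : ∀ ℓ, Measurable (f₁ ℓ))
    (h0nn : ∀ ℓ y, 0 ≤ f₀ ℓ y) (h1nn : ∀ ℓ y, 0 ≤ f₁ ℓ y)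
    (h0int : ∀ ℓ, ∫ y, f₀ ℓ y ∂μ = 1) (h1int : ∀ ℓ, ∫ y, f₁ ℓ y ∂μ = 1)
    (h0pos : ∀ ℓ, ∀ᵐ y ∂μ, 0 < f₀ ℓ y) (h1pos : ∀ ℓ, ∀ᵐ y ∂μ, 0 < f₁ ℓ y)
    (C : Fin K → ℝ) (hC : ∀ ℓ, 0 < C ℓ)
    (μ₀ μ₁ : ℝ) (hμ₀ : 0 < μ₀) (hμ₁ : 0 < μ₁)
    (φ : ℝ → ℝ) (hφ : ∀ x, φ x = min (μ₁ * x) (μ₀ * (1 - x)))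
    (G : ℝ → ℝ) (hG : ConcaveOn ℝ (Icc (0:ℝ) 1) G)
    (M : ℝ) (hGbd : ∀ x ∈ Icc (0:ℝ) 1, |G x| ≤ M)
    (hGrange : ∀ x ∈ Icc (0:ℝ) 1, 0 ≤ G x ∧ G x ≤ φ x)
    (Gbar : Fin K → ℝ → ℝ)
    (hGbar : ∀ ℓ x, Gbar ℓ x = C ℓ + ∫ y, ((1 - x) * f₀ ℓ y + x * f₁ ℓ y) *
        G (x * f₁ ℓ y / ((1 - x) * f₀ ℓ y + x * f₁ ℓ y)) ∂μ)
    (Gtilde : ℝ → ℝ)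
    (hGtilde : ∀ x, Gtilde x =
      Finset.univ.inf' (Finset.univ_nonempty_iff.mpr (Fin.pos_iff_nonempty.mp hK))
        (fun ℓ => Gbar ℓ x)) :
    (∀ ℓ, ConcaveOn ℝ (Icc (0:ℝ) 1) (Gbar ℓ)) ∧
    ConcaveOn ℝ (Icc (0:ℝ) 1) Gtilde ∧
    0 < Gtilde 0 ∧ 0 < Gtilde 1 ∧
    ConcaveOn ℝ (Icc (0:ℝ) 1) (fun x => min (φ x) (Gtilde x)) :=
  lemma3_backward_recursion_concavity_general μ K hK f₀ f₁ hm0 hm1 h0nn h1nn h0int h1int C hC μ₀ μ₁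
    φ hφ G hG M hGbd hGrange Gbar hGbar Gtilde hGtilde
end

section
/- Let h : [0,1] → ℝ be concave with h(0) > 0 and h(1) > 0, and let μ₀, μ₁ > 0. Then the set C = { x ∈ [0,1] : h(x) < μ₁ x and h(x) < μ₀ (1−x) } is convex (an interval), and C ⊆ (0,1). -/
/-!
A concave function that lies above a convex one at some point and strictly below it at a later
point stays strictly below it from then on, since their concave difference cannot rise again
after turning negative. As `h 0 > 0` and `h 1 > 0`, this makes `{h x < μ₁ x}` closed upwards
and `{h x < μ₀ (1 - x)}` closed downwards in `[0, 1]`, so their intersection is an interval;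
it misses `0` and `1` because the stopping costs vanish there.
-/

open Set

section ConcaveBelowConvex

variable {𝕜 β : Type*} [Field 𝕜] [LinearOrder 𝕜] [IsStrictOrderedRing 𝕜]
  [AddCommGroup β] [LinearOrder β] [IsOrderedAddMonoid β] [Module 𝕜 β] [PosSMulStrictMono 𝕜 β]
  {s : Set 𝕜} {f g : 𝕜 → β} {a b x y : 𝕜}

theorem ConcaveOn.lt_of_le_left_of_lt (hf : ConcaveOn 𝕜 s f) (hg : ConvexOn 𝕜 s g)
    (ha : a ∈ s) (hy : y ∈ s) (hax : a ≤ x) (hxy : x ≤ y) (hfa : g a ≤ f a) (hfx : f x < g x) :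
    f y < g y := by
  by_contra! hfy
  rcases hxy.eq_or_lt with rfl | hxy
  · exact hfx.not_ge hfy
  have hle : f a - g a ≤ f x - g x :=
    (hf.sub hg).left_le_of_le_right'' ha hy hax hxy ((sub_neg.2 hfx).le.trans (sub_nonneg.2 hfy))
  exact ((sub_nonneg.2 hfa).trans hle).not_gt (sub_neg.2 hfx)

theorem ConcaveOn.lt_of_le_right_of_lt (hf : ConcaveOn 𝕜 s f) (hg : ConvexOn 𝕜 s g)
    (hy : y ∈ s) (hb : b ∈ s) (hyx : y ≤ x) (hxb : x ≤ b) (hfb : g b ≤ f b) (hfx : f x < g x) :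
    f y < g y := by
  by_contra! hfy
  rcases hyx.eq_or_lt with rfl | hyx
  · exact hfx.not_ge hfy
  have hle : f b - g b ≤ f x - g x :=
    (hf.sub hg).right_le_of_le_left'' hy hb hyx hxb ((sub_neg.2 hfx).le.trans (sub_nonneg.2 hfy))
  exact ((sub_nonneg.2 hfb).trans hle).not_gt (sub_neg.2 hfx)

end ConcaveBelowConvex

theorem continuation_region_interval_general
    (h : ℝ → ℝ) (hconc : ConcaveOn ℝ (Icc (0:ℝ) 1) h)
    (h0 : 0 < h 0) (h1 : 0 < h 1)
    (μ₀ μ₁ : ℝ) :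
    Convex ℝ {x ∈ Icc (0:ℝ) 1 | h x < μ₁ * x ∧ h x < μ₀ * (1 - x)} ∧
    {x ∈ Icc (0:ℝ) 1 | h x < μ₁ * x ∧ h x < μ₀ * (1 - x)} ⊆ Ioo (0:ℝ) 1 := by
  have hcost₁ : ConvexOn ℝ (Icc (0:ℝ) 1) fun x => μ₁ * x :=
    (LinearMap.mulLeft ℝ μ₁).convexOn (convex_Icc 0 1)
  have hcost₀ : ConvexOn ℝ (Icc (0:ℝ) 1) fun x => μ₀ * (1 - x) :=
    ⟨convex_Icc 0 1, fun x _ y _ a b _ _ hab => le_of_eq <| by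
      simp only [smul_eq_mul]; linear_combination (-μ₀) * hab⟩
  refine ⟨convex_iff_ordConnected.2 ⟨?_⟩, ?_⟩
  · rintro x ⟨hx, hx₁, -⟩ y ⟨hy, -, hy₀⟩ z ⟨hxz, hzy⟩
    have hz : z ∈ Icc (0:ℝ) 1 := ⟨hx.1.trans hxz, hzy.trans hy.2⟩
    exact ⟨hz, hconc.lt_of_le_left_of_lt hcost₁ (left_mem_Icc.2 zero_le_one) hz hx.1 hxz
        (by simpa using h0.le) hx₁,
      hconc.lt_of_le_right_of_lt hcost₀ hz (right_mem_Icc.2 zero_le_one) hzy hy.2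
        (by simpa using h1.le) hy₀⟩
  · rintro x ⟨hx, hx₁, hx₀⟩
    refine ⟨hx.1.lt_of_ne ?_, hx.2.lt_of_ne ?_⟩ <;> rintro rfl
    · rw [mul_zero] at hx₁
      linarith
    · rw [sub_self, mul_zero] at hx₀
      linarith

/-- Lemma 4 of the paper (structure): the continuation region, where the concave
continuation cost `h` is strictly below both stopping costs, is a convex subset
of `[0,1]` contained in the open interval `(0,1)`. -/
theorem continuation_region_interval
    (h : ℝ → ℝ) (hconc : ConcaveOn ℝ (Icc (0:ℝ) 1) h)
    (h0 : 0 < h 0) (h1 : 0 < h 1)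
    (μ₀ μ₁ : ℝ) (hμ₀ : 0 < μ₀) (hμ₁ : 0 < μ₁) :
    Convex ℝ {x ∈ Icc (0:ℝ) 1 | h x < μ₁ * x ∧ h x < μ₀ * (1 - x)} ∧
    {x ∈ Icc (0:ℝ) 1 | h x < μ₁ * x ∧ h x < μ₀ * (1 - x)} ⊆ Ioo (0:ℝ) 1 :=
  continuation_region_interval_general h hconc h0 h1 μ₀ μ₁
end
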